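/- (Decay of the grand maximal function for compactly supported distributions.) Let n ≥ 1, let p(·) ∈ M𝒫₀ with exponent p₀, and let N be an integer with N > n/p₀ + n + 1. Suppose f ∈ H^{p(·)} and R > 1 are such that f is supported in the closed ball B(0,R), i.e. f(φ) = 0 for every Schwartz function φ whose support is disjoint from the closed ball B(0,R). Then for every x with |x| ≥ 4R, 𝓜_N f(x) ≤ C ‖f‖_{H^{p(·)}} ‖χ_{B(0,R)}‖_{p(·)}^{−1}, where C depends only on N, n, p(·) and p₀. -/

import Mathlib

open MeasureTheory Metric Filter Topology ENNReal SchwartzMap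
open scoped NNReal

noncomputable section

namespace VarHardy

variable {n : ℕ}

/-- `n`-dimensional Euclidean space. -/
abbrev Euc (n : ℕ) := EuclideanSpace ℝ (Fin n)

/-- The closed axis-parallel cube centered at `c` with half side length `r`. -/
def cube (c : Euc n) (r : ℝ) : Set (Euc n) := {y | ∀ i, |y i - c i| ≤ r}

/-- The Hardy–Littlewood maximal operator of an `ℝ≥0∞`-valued function: the supremum of
the averages over all axis-parallel cubes containing the point. -/
def maximalFn (f : Euc n → ℝ≥0∞) (x : Euc n) : ℝ≥0∞ :=
  ⨆ (c : Euc n) (r : ℝ) (_ : 0 < r) (_ : x ∈ cube c r),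
    (volume (cube c r))⁻¹ * ∫⁻ y in cube c r, f y

/-- The Hardy–Littlewood maximal operator of a real-valued function. -/
def maximalOp (f : Euc n → ℝ) (x : Euc n) : ℝ≥0∞ :=
  maximalFn (fun y => (‖f y‖₊ : ℝ≥0∞)) x

/-- The Luxemburg quasi-norm `‖f‖_{p(·)}` of an `ℝ≥0∞`-valued function `f`. -/
def luxNorm (p : Euc n → ℝ) (f : Euc n → ℝ≥0∞) : ℝ≥0∞ :=
  sInf {l : ℝ≥0∞ | ∫⁻ x, (f x / l) ^ p x ∂volume ≤ 1}

/-- The Luxemburg quasi-norm of a real-valued function. -/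
def luxNorm' (p : Euc n → ℝ) (f : Euc n → ℝ) : ℝ≥0∞ :=
  luxNorm p (fun x => (‖f x‖₊ : ℝ≥0∞))

/-- `p(·) ∈ M𝒫₀` with exponent `p₀`:  `0 < p₀ < p₋`, `p₊ < ∞`, and the Hardy–Littlewood
maximal operator is bounded on `L^{p(·)/p₀}`. -/
structure IsMP0 (p : Euc n → ℝ) (p₀ : ℝ) : Prop where
  meas : Measurable p
  p₀_pos : 0 < p₀
  p₀_lt_essInf : ∃ m : ℝ, p₀ < m ∧ ∀ᵐ x ∂(volume : Measure (Euc n)), m ≤ p x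
  essSup_lt_top : ∃ M : ℝ, ∀ᵐ x ∂(volume : Measure (Euc n)), p x ≤ M
  maximal_bound : ∃ C : ℝ≥0∞, C < ∞ ∧ ∀ f : Euc n → ℝ≥0∞, Measurable f →
    luxNorm (fun x => p x / p₀) (maximalFn f) ≤ C * luxNorm (fun x => p x / p₀) f

section Schwartz

lemma hasTemperateGrowth_affine (A : Euc n →L[ℝ] Euc n) (b : Euc n) :
    Function.HasTemperateGrowth (fun y : Euc n => A y + b) := by
  apply Function.HasTemperateGrowth.of_fderiv (k := 1) (C := ‖A‖ + ‖b‖)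
  · have h : (fderiv ℝ fun y : Euc n => A y + b) = fun _ => A := by
      funext y
      rw [fderiv_add_const]
      exact A.fderiv
    rw [h]
    exact .const _
  · exact A.differentiable.add_const _
  · intro z
    have h1 : ‖A z + b‖ ≤ ‖A‖ * ‖z‖ + ‖b‖ :=
      (norm_add_le _ _).trans (by gcongr; exact A.le_opNorm z)
    have h2 : ‖A‖ * ‖z‖ + ‖b‖ ≤ (‖A‖ + ‖b‖) * (1 + ‖z‖) ^ 1 := by
      have hz := norm_nonneg z
      have hA := A.opNorm_nonneg
      have hb := norm_nonneg b
      nlinarith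
    exact h1.trans h2

lemma hasTemperateGrowth_dilateShift (t : ℝ) (x : Euc n) :
    Function.HasTemperateGrowth (fun y : Euc n => t⁻¹ • (x - y)) := by
  have h : (fun y : Euc n => t⁻¹ • (x - y)) =
      fun y : Euc n => (-(t⁻¹ • ContinuousLinearMap.id ℝ (Euc n))) y + t⁻¹ • x := by
    funext y
    simp [ContinuousLinearMap.neg_apply, ContinuousLinearMap.smul_apply,
      ContinuousLinearMap.id_apply, smul_sub, sub_eq_neg_add]
  rw [h]
  exact hasTemperateGrowth_affine _ _

lemma antilipschitz_dilateShift (t : ℝ) (ht : 0 < t) (x : Euc n) :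
    AntilipschitzWith (⟨t, ht.le⟩ : ℝ≥0) (fun y : Euc n => t⁻¹ • (x - y)) := by
  apply AntilipschitzWith.of_le_mul_dist
  intro y z
  have h : dist (t⁻¹ • (x - y)) (t⁻¹ • (x - z)) = t⁻¹ * dist y z := by
    rw [dist_smul₀, Real.norm_eq_abs, dist_sub_left, abs_of_pos (inv_pos.2 ht)]
  rw [h]
  show dist y z ≤ t * (t⁻¹ * dist y z)
  rw [← mul_assoc, mul_inv_cancel₀ ht.ne', one_mul]

/-- The Schwartz function `y ↦ t^{-n} Φ((x - y)/t) = Φ_t(x - y)`. -/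
def dilateShift (Φ : 𝓢(Euc n, ℝ)) (t : ℝ) (ht : 0 < t) (x : Euc n) : 𝓢(Euc n, ℝ) :=
  (t ^ n)⁻¹ • SchwartzMap.compCLMOfAntilipschitz ℝ (hasTemperateGrowth_dilateShift t x)
    (antilipschitz_dilateShift t ht x) Φ

@[simp] lemma dilateShift_apply (Φ : 𝓢(Euc n, ℝ)) (t : ℝ) (ht : 0 < t) (x y : Euc n) :
    dilateShift Φ t ht x y = (t ^ n)⁻¹ * Φ (t⁻¹ • (x - y)) := rfl

/-- Tempered distributions on `ℝⁿ`. -/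
abbrev Distribution (n : ℕ) := 𝓢(Euc n, ℝ) →L[ℝ] ℝ

/-- The convolution `(f ∗ Φ_t)(x)` of a tempered distribution `f` with `Φ_t`. -/
def distConv (f : Distribution n) (Φ : 𝓢(Euc n, ℝ)) (t : ℝ) (ht : 0 < t) (x : Euc n) : ℝ :=
  f (dilateShift Φ t ht x)

/-- The radial maximal function `M_{Φ,0} f`. -/
def radialMax (f : Distribution n) (Φ : 𝓢(Euc n, ℝ)) (x : Euc n) : ℝ≥0∞ :=
  ⨆ (t : ℝ) (ht : 0 < t), (‖distConv f Φ t ht x‖₊ : ℝ≥0∞)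

/-- The partial derivative (as an operator on Schwartz functions) in the direction of the
`i`-th standard basis vector. -/
def basisPDeriv (i : Fin n) : 𝓢(Euc n, ℝ) →L[ℝ] 𝓢(Euc n, ℝ) :=
  LineDeriv.lineDerivOpCLM ℝ 𝓢(Euc n, ℝ) (EuclideanSpace.single i (1 : ℝ))

/-- The multi-index partial derivative `D^β` of a Schwartz function. -/
def mDeriv (β : Fin n → ℕ) (Φ : 𝓢(Euc n, ℝ)) : 𝓢(Euc n, ℝ) :=
  (List.finRange n).foldr (fun i Ψ => (fun Ψ' => basisPDeriv i Ψ')^[β i] Ψ) Φ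

/-- The collection `𝓢_N` of Schwartz functions all of whose seminorms
`‖Φ‖_{α,β} = sup_x |x^α D^β Φ(x)|` with `|α|, |β| ≤ N` are at most 1. -/
def schwartzSetN (N : ℕ) : Set 𝓢(Euc n, ℝ) :=
  {Φ | ∀ α β : Fin n → ℕ, (∑ i, α i) ≤ N → (∑ i, β i) ≤ N →
    ∀ x : Euc n, |(∏ i, x i ^ α i) * mDeriv β Φ x| ≤ 1}

/-- The grand maximal function `𝓜_N f`. -/
def grandMax (N : ℕ) (f : Distribution n) (x : Euc n) : ℝ≥0∞ :=
  ⨆ (Φ : 𝓢(Euc n, ℝ)) (_ : Φ ∈ schwartzSetN N) (t : ℝ) (ht : 0 < t),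
    (‖distConv f Φ t ht x‖₊ : ℝ≥0∞)

/-- The `H^{p(·)}` quasi-norm `‖𝓜_N f‖_{p(·)}`. -/
def hardyNorm (p : Euc n → ℝ) (N : ℕ) (f : Distribution n) : ℝ≥0∞ :=
  luxNorm p (grandMax N f)

/-- The distribution `F` is represented by the locally integrable function `g`. -/
def Represents (F : Distribution n) (g : Euc n → ℝ) : Prop :=
  ∀ φ : 𝓢(Euc n, ℝ), F φ = ∫ x, g x * φ x

/-- The convolution `(g ∗ Φ_t)(x)` of a function `g` with `Φ_t`. -/
def funConv (g : Euc n → ℝ) (Φ : 𝓢(Euc n, ℝ)) (t : ℝ) (x : Euc n) : ℝ :=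
  ∫ y : Euc n, g y * ((t ^ n)⁻¹ * Φ (t⁻¹ • (x - y)))

/-- The radial maximal function `M_{Φ,0} g` of a function `g`. -/
def funRadialMax (g : Euc n → ℝ) (Φ : 𝓢(Euc n, ℝ)) (x : Euc n) : ℝ≥0∞ :=
  ⨆ (t : ℝ) (_ : 0 < t), (‖funConv g Φ t x‖₊ : ℝ≥0∞)

end Schwartz

section Atoms

/-- The (ℝ≥0∞-valued) characteristic function of the closed ball `B(x₀, r)`. -/
def ballInd (x₀ : Euc n) (r : ℝ) : Euc n → ℝ≥0∞ := (closedBall x₀ r).indicator 1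

/-- `‖χ_B‖_{p(·)}` for the ball `B = B(x₀,r)`. -/
def ballNorm (p : Euc n → ℝ) (x₀ : Euc n) (r : ℝ) : ℝ≥0∞ := luxNorm p (ballInd x₀ r)

/-- A `(p(·), ∞)` atom supported on the ball `B(x₀, r)`. -/
structure IsAtomInf (p : Euc n → ℝ) (p₀ : ℝ) (a : Euc n → ℝ) (x₀ : Euc n) (r : ℝ) : Prop where
  meas : Measurable a
  r_pos : 0 < r
  supp : ∀ x ∉ closedBall x₀ r, a x = 0
  size : ∀ᵐ x ∂(volume : Measure (Euc n)), (‖a x‖₊ : ℝ≥0∞) ≤ (ballNorm p x₀ r)⁻¹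
  moments : ∀ α : Fin n → ℕ, ((∑ i, α i : ℕ) : ℤ) ≤ ⌊(n : ℝ) * (1 / p₀ - 1)⌋ →
    ∫ x : Euc n, a x * ∏ i, (x i) ^ α i = 0

/-- A `(p(·), q)` atom supported on the ball `B(x₀, r)`. -/
structure IsAtomQ (p : Euc n → ℝ) (p₀ q : ℝ) (a : Euc n → ℝ) (x₀ : Euc n) (r : ℝ) : Prop where
  meas : Measurable a
  r_pos : 0 < r
  supp : ∀ x ∉ closedBall x₀ r, a x = 0
  size : (∫⁻ x, (‖a x‖₊ : ℝ≥0∞) ^ q) ^ (1 / q) ≤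
    (volume (closedBall x₀ r)) ^ (1 / q) * (ballNorm p x₀ r)⁻¹
  moments : ∀ α : Fin n → ℕ, ((∑ i, α i : ℕ) : ℤ) ≤ ⌊(n : ℝ) * (1 / p₀ - 1)⌋ →
    ∫ x : Euc n, a x * ∏ i, (x i) ^ α i = 0

/-- The function `Σ_j λ_j χ_{B_j} / ‖χ_{B_j}‖_{p(·)}` associated to an atomic decomposition. -/
def atomSumFn (p : Euc n → ℝ) (lam : ℕ → ℝ) (x₀ : ℕ → Euc n) (r : ℕ → ℝ) : Euc n → ℝ≥0∞ :=
  fun x => ∑' j, ENNReal.ofReal (lam j) * (ballNorm p (x₀ j) (r j))⁻¹ * ballInd (x₀ j) (r j) x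

end Atoms

section Weights

/-- `w` is an `A₁` weight with constant (at most) `A`. -/
def IsA1 (w : Euc n → ℝ) (A : ℝ) : Prop :=
  Measurable w ∧ LocallyIntegrable w volume ∧
    (∀ᵐ x ∂(volume : Measure (Euc n)), 0 < w x) ∧
    ∀ᵐ x ∂(volume : Measure (Euc n)), maximalOp w x ≤ ENNReal.ofReal A * ENNReal.ofReal (w x)

/-- `w` satisfies the reverse Hölder inequality with exponent `s` and constant (at most) `A`. -/
def IsRH (w : Euc n → ℝ) (s A : ℝ) : Prop :=
  ∀ (x : Euc n) (r : ℝ), 0 < r →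
    ((volume (closedBall x r))⁻¹ * ∫⁻ y in closedBall x r, ENNReal.ofReal (w y) ^ s) ^ (1 / s) ≤
      ENNReal.ofReal A *
        ((volume (closedBall x r))⁻¹ * ∫⁻ y in closedBall x r, ENNReal.ofReal (w y))

/-- The conjugate exponent `s' = s/(s-1)`. -/
def conjExp (s : ℝ) : ℝ := s / (s - 1)

end Weights


/-!
Fix `|x| ≥ 4R`, `|z| ≤ R`, `Φ ∈ 𝓢_N` and `t > 0`, put `s = min t R`, and let `χ` be a bump
equal to `1` on `B(0,2)` and supported in `B(0,3)`. The function
`Ψ(u) = K⁻¹ (s/t)ⁿ χ((z - s u)/R) Φ((x - z + s u)/t)` satisfies `K Ψ_s(z - y) = Φ_t(x - y)` for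
`|y| < 2R`, a neighbourhood of `B(0,R) ⊇ supp f`, so `(f ∗ Φ_t)(x) = K (f ∗ Ψ_s)(z)`.
On the support of the cutoff `|x - y| ≥ R` and `|s u| ≤ 4R`: for `t ≤ R` the weight `|u|^m` is
at most `(4 |(x - y)/t|)^m` and is absorbed by the decay of `Φ`, for `t ≥ R` it is at most `4^m`.
Hence `Ψ ∈ 𝓢_N` for a `K` depending only on `n` and `N`, and `𝓜_N f(x) ≤ K 𝓜_N f(z)` on
`B(0,R)`. Thus `K⁻¹ 𝓜_N f(x) χ_{B(0,R)} ≤ 𝓜_N f`, and the monotonicity and homogeneity of the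
Luxemburg norm give `𝓜_N f(x) ‖χ_{B(0,R)}‖_{p(·)} ≤ K ‖𝓜_N f‖_{p(·)}`.
-/

section Smooth

open scoped ContDiff

section CoordDeriv

def coordDeriv (i : Fin n) (h : Euc n → ℝ) : Euc n → ℝ :=
  fun y => fderiv ℝ h y (EuclideanSpace.single i 1)

def listDeriv (l : List (Fin n)) (h : Euc n → ℝ) : Euc n → ℝ := l.foldr coordDeriv h

@[simp] lemma listDeriv_nil (h : Euc n → ℝ) : listDeriv [] h = h := rfl

@[simp] lemma listDeriv_cons (i : Fin n) (l : List (Fin n)) (h : Euc n → ℝ) :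
    listDeriv (i :: l) h = coordDeriv i (listDeriv l h) := rfl

lemma listDeriv_append (l₁ l₂ : List (Fin n)) (h : Euc n → ℝ) :
    listDeriv (l₁ ++ l₂) h = listDeriv l₁ (listDeriv l₂ h) := by
  simp [listDeriv, List.foldr_append]

variable {h g : Euc n → ℝ}

lemma contDiff_coordDeriv (hh : ContDiff ℝ ∞ h) (i : Fin n) : ContDiff ℝ ∞ (coordDeriv i h) :=
  (hh.fderiv_right (m := ∞) le_rfl).clm_apply contDiff_const

lemma contDiff_listDeriv (hh : ContDiff ℝ ∞ h) (l : List (Fin n)) :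
    ContDiff ℝ ∞ (listDeriv l h) := by
  induction l with
  | nil => exact hh
  | cons i l ih => exact contDiff_coordDeriv ih i

lemma tsupport_listDeriv_subset (l : List (Fin n)) (h : Euc n → ℝ) :
    tsupport (listDeriv l h) ⊆ tsupport h := by
  induction l with
  | nil => exact subset_rfl
  | cons i l ih => exact (tsupport_fderiv_apply_subset ℝ _).trans ih

lemma coordDeriv_add (hh : Differentiable ℝ h) (hg : Differentiable ℝ g) (i : Fin n) :
    coordDeriv i (fun y => h y + g y) = fun y => coordDeriv i h y + coordDeriv i g y := by
  ext y
  simp [coordDeriv, fderiv_fun_add (hh y) (hg y)]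

lemma coordDeriv_const_mul (c : ℝ) (hh : Differentiable ℝ h) (i : Fin n) :
    coordDeriv i (fun y => c * h y) = fun y => c * coordDeriv i h y := by
  ext y
  simp [coordDeriv, fderiv_const_mul (hh y)]

lemma coordDeriv_mul (hh : Differentiable ℝ h) (hg : Differentiable ℝ g) (i : Fin n) :
    coordDeriv i (fun y => h y * g y) =
      fun y => coordDeriv i h y * g y + h y * coordDeriv i g y := by
  ext y
  simp only [coordDeriv, fderiv_fun_mul (hh y) (hg y), add_apply, smul_apply, smul_eq_mul]
  ring

lemma coordDeriv_comp_smul_add (hh : Differentiable ℝ h) (a : ℝ) (b : Euc n) (i : Fin n) :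
    coordDeriv i (fun y => h (a • y + b)) = fun y => a * coordDeriv i h (a • y + b) := by
  ext y
  have hA : HasFDerivAt (fun y : Euc n => a • y + b) (a • ContinuousLinearMap.id ℝ (Euc n)) y :=
    ((hasFDerivAt_id y).const_smul a).add_const b
  unfold coordDeriv
  rw [show (fun y => h (a • y + b)) = h ∘ fun y => a • y + b from rfl,
    ((hh _).hasFDerivAt.comp y hA).fderiv]
  simp

lemma listDeriv_add (hh : ContDiff ℝ ∞ h) (hg : ContDiff ℝ ∞ g) (l : List (Fin n)) :
    listDeriv l (fun y => h y + g y) = fun y => listDeriv l h y + listDeriv l g y := by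
  induction l with
  | nil => rfl
  | cons i l ih =>
    rw [listDeriv_cons, ih, coordDeriv_add ((contDiff_listDeriv hh l).differentiable (by simp))
      ((contDiff_listDeriv hg l).differentiable (by simp))]
    rfl

lemma listDeriv_const_mul (c : ℝ) (hh : ContDiff ℝ ∞ h) (l : List (Fin n)) :
    listDeriv l (fun y => c * h y) = fun y => c * listDeriv l h y := by
  induction l with
  | nil => rfl
  | cons i l ih =>
    rw [listDeriv_cons, ih,
      coordDeriv_const_mul c ((contDiff_listDeriv hh l).differentiable (by simp))]
    rfl

lemma coordDeriv_comm (hh : ContDiff ℝ ∞ h) (i j : Fin n) :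
    coordDeriv i (coordDeriv j h) = coordDeriv j (coordDeriv i h) := by
  ext y
  have hsymm : IsSymmSndFDerivAt ℝ h y :=
    hh.contDiffAt.isSymmSndFDerivAt (by simpa using ENat.LEInfty.out)
  have hdiff : DifferentiableAt ℝ (fderiv ℝ h) y :=
    (hh.fderiv_right (m := ∞) le_rfl).differentiable (by simp) y
  unfold coordDeriv
  simp only [fderiv_clm_apply hdiff (differentiableAt_const _)]
  simpa using hsymm _ _

lemma listDeriv_perm (hh : ContDiff ℝ ∞ h) {l l' : List (Fin n)} (hl : l.Perm l') :
    listDeriv l h = listDeriv l' h := by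
  induction hl with
  | nil => rfl
  | cons i _ ih => rw [listDeriv_cons, listDeriv_cons, ih]
  | swap i j l => exact coordDeriv_comm (contDiff_listDeriv hh l) j i
  | trans _ _ ih₁ ih₂ => rw [ih₁, ih₂]

end CoordDeriv

section Leibniz

variable {F G : Euc n → ℝ} {a c : ℝ} {b d : Euc n}

lemma coordDeriv_listDeriv_mul_comp_affine (hF : ContDiff ℝ ∞ F) (hG : ContDiff ℝ ∞ G)
    (γ δ : List (Fin n)) (i : Fin n) :
    coordDeriv i (fun u => listDeriv γ F (a • u + b) * listDeriv δ G (c • u + d)) =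
      fun u => a * (listDeriv (i :: γ) F (a • u + b) * listDeriv δ G (c • u + d)) +
        c * (listDeriv γ F (a • u + b) * listDeriv (i :: δ) G (c • u + d)) := by
  have hF' := (contDiff_listDeriv hF γ).differentiable (by simp)
  have hG' := (contDiff_listDeriv hG δ).differentiable (by simp)
  have hFa : Differentiable ℝ fun u => listDeriv γ F (a • u + b) := hF'.comp (by fun_prop)
  have hGc : Differentiable ℝ fun u => listDeriv δ G (c • u + d) := hG'.comp (by fun_prop)
  rw [coordDeriv_mul hFa hGc, coordDeriv_comp_smul_add hF', coordDeriv_comp_smul_add hG']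
  ext u
  simp only [listDeriv_cons]
  ring

theorem abs_mul_listDeriv_mul_comp_affine_le (hF : ContDiff ℝ ∞ F) (hG : ContDiff ℝ ∞ G)
    (ha : |a| ≤ 1) (hc : |c| ≤ 1) (u : Euc n) (w M : ℝ) (l γ δ : List (Fin n))
    (hM : ∀ γ' δ' : List (Fin n), γ'.length ≤ γ.length + l.length →
      δ'.length ≤ δ.length + l.length →
      |w * (listDeriv γ' F (a • u + b) * listDeriv δ' G (c • u + d))| ≤ M) :
    |w * listDeriv l (fun v => listDeriv γ F (a • v + b) * listDeriv δ G (c • v + d)) u| ≤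
      2 ^ l.length * M := by
  -- Peeling off the innermost derivative lets the product rule split the product first.
  induction l using List.reverseRecOn generalizing γ δ with
  | nil => simpa using hM γ δ le_rfl le_rfl
  | append_singleton l i ih =>
    have smooth : ∀ γ' δ' : List (Fin n), ContDiff ℝ ∞
        (fun v => listDeriv γ' F (a • v + b) * listDeriv δ' G (c • v + d)) := fun γ' δ' =>
      ((contDiff_listDeriv hF γ').comp (by fun_prop)).mul
        ((contDiff_listDeriv hG δ').comp (by fun_prop))
    have hleft := ih (i :: γ) δ fun γ' δ' hγ' hδ' =>
      hM γ' δ' (by simp at hγ' ⊢; omega) (by simp at hδ' ⊢; omega)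
    have hright := ih γ (i :: δ) fun γ' δ' hγ' hδ' =>
      hM γ' δ' (by simp at hγ' ⊢; omega) (by simp at hδ' ⊢; omega)
    rw [listDeriv_append, listDeriv_cons, listDeriv_nil,
      coordDeriv_listDeriv_mul_comp_affine hF hG,
      listDeriv_add (contDiff_const.mul (smooth _ _)) (contDiff_const.mul (smooth _ _)),
      listDeriv_const_mul _ (smooth _ _), listDeriv_const_mul _ (smooth _ _)]
    calc _ ≤ |a| * |w * listDeriv l (fun v => listDeriv (i :: γ) F (a • v + b) *
            listDeriv δ G (c • v + d)) u| + |c| * |w * listDeriv l (fun v =>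
            listDeriv γ F (a • v + b) * listDeriv (i :: δ) G (c • v + d)) u| := by
          rw [← abs_mul, ← abs_mul]
          exact (abs_add_le _ _).trans_eq' (by ring_nf)
      _ ≤ 1 * (2 ^ l.length * M) + 1 * (2 ^ l.length * M) := by gcongr
      _ = 2 ^ (l ++ [i]).length * M := by
          rw [List.length_append, List.length_singleton, pow_succ]; ring

end Leibniz

section MultiIndex

lemma coe_basisPDeriv (i : Fin n) (G : 𝓢(Euc n, ℝ)) : ⇑(basisPDeriv i G) = coordDeriv i ⇑G :=
  funext fun x => SchwartzMap.lineDerivOp_apply_eq_fderiv _ G x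

def multiIndexList (β : Fin n → ℕ) : List (Fin n) :=
  (List.finRange n).flatMap fun i => List.replicate (β i) i

lemma coe_iterate_basisPDeriv (i : Fin n) (k : ℕ) (G : 𝓢(Euc n, ℝ)) :
    ⇑((fun G' => basisPDeriv i G')^[k] G) = listDeriv (List.replicate k i) ⇑G := by
  induction k with
  | zero => rfl
  | succ k ih => rw [Function.iterate_succ_apply', coe_basisPDeriv, ih]; rfl

lemma coe_mDeriv (β : Fin n → ℕ) (G : 𝓢(Euc n, ℝ)) :
    ⇑(mDeriv β G) = listDeriv (multiIndexList β) ⇑G := by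
  unfold mDeriv multiIndexList
  induction List.finRange n with
  | nil => rfl
  | cons i l ih => rw [List.foldr_cons, coe_iterate_basisPDeriv, ih, List.flatMap_cons,
      listDeriv_append]

lemma length_multiIndexList (β : Fin n → ℕ) : (multiIndexList β).length = ∑ i, β i := by
  simp [multiIndexList, List.length_flatMap, Fin.sum_univ_def]

lemma count_multiIndexList (β : Fin n → ℕ) (i : Fin n) : (multiIndexList β).count i = β i := by
  simp [multiIndexList, List.count_flatMap, List.count_replicate, ← Fin.sum_univ_def]

lemma sum_count_eq_length (l : List (Fin n)) : ∑ i, l.count i = l.length := by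
  simpa using Multiset.sum_count_eq_card (s := Finset.univ) (m := (l : Multiset (Fin n))) (by simp)

lemma listDeriv_eq_coe_mDeriv (l : List (Fin n)) (G : 𝓢(Euc n, ℝ)) :
    listDeriv l ⇑G = ⇑(mDeriv (fun i => l.count i) G) := by
  rw [coe_mDeriv]
  exact listDeriv_perm (G.smooth ⊤) (List.perm_iff_count.2 fun i => by rw [count_multiIndexList])

end MultiIndex

section SchwartzSetN

variable {N : ℕ} {Φ : 𝓢(Euc n, ℝ)}

lemma abs_prod_pow_mul_listDeriv_le_one (hΦ : Φ ∈ schwartzSetN N) {α : Fin n → ℕ}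
    (hα : ∑ i, α i ≤ N) {l : List (Fin n)} (hl : l.length ≤ N) (ξ : Euc n) :
    |(∏ i, ξ i ^ α i) * listDeriv l ⇑Φ ξ| ≤ 1 := by
  rw [listDeriv_eq_coe_mDeriv]
  exact hΦ α _ hα (by rwa [sum_count_eq_length]) ξ

lemma abs_listDeriv_le_one (hΦ : Φ ∈ schwartzSetN N) {l : List (Fin n)} (hl : l.length ≤ N)
    (ξ : Euc n) : |listDeriv l ⇑Φ ξ| ≤ 1 := by
  simpa using abs_prod_pow_mul_listDeriv_le_one hΦ (α := 0) (by simp) hl ξ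

lemma norm_le_card_mul_abs_of_forall_abs_le (ξ : Euc n) {i : Fin n} (hi : ∀ j, |ξ j| ≤ |ξ i|) :
    ‖ξ‖ ≤ n * |ξ i| := by
  have hn : (n : ℝ) ≤ n ^ 2 := by
    rcases Nat.eq_zero_or_pos n with h | h
    · simp [h]
    · exact_mod_cast Nat.le_self_pow two_ne_zero n
  refine (pow_le_pow_iff_left₀ (norm_nonneg _) (by positivity) two_ne_zero).1 ?_
  calc ‖ξ‖ ^ 2 = ∑ j, |ξ j| ^ 2 := by simp [EuclideanSpace.norm_sq_eq]
    _ ≤ ∑ _j : Fin n, |ξ i| ^ 2 :=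
        Finset.sum_le_sum fun j _ => pow_le_pow_left₀ (abs_nonneg _) (hi j) 2
    _ = n * |ξ i| ^ 2 := by simp
    _ ≤ (n * |ξ i|) ^ 2 := by rw [mul_pow]; gcongr

lemma norm_pow_mul_abs_listDeriv_le (hΦ : Φ ∈ schwartzSetN N) {l : List (Fin n)}
    (hl : l.length ≤ N) {m : ℕ} (hm : m ≤ N) (ξ : Euc n) :
    ‖ξ‖ ^ m * |listDeriv l ⇑Φ ξ| ≤ n ^ m := by
  rcases isEmpty_or_nonempty (Fin n) with hn | hn
  · have : ‖ξ‖ = 0 := by simp [Subsingleton.elim ξ 0]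
    calc ‖ξ‖ ^ m * |listDeriv l ⇑Φ ξ| ≤ ‖ξ‖ ^ m :=
          mul_le_of_le_one_right (by positivity) (abs_listDeriv_le_one hΦ hl ξ)
      _ ≤ n ^ m := by rw [this]; gcongr; positivity
  obtain ⟨i, -, hi⟩ := Finset.exists_max_image Finset.univ (fun j => |ξ j|) Finset.univ_nonempty
  have hcoord : |ξ i| ^ m * |listDeriv l ⇑Φ ξ| ≤ 1 := by
    simpa [Pi.single_apply, Finset.prod_ite_eq', abs_mul, abs_pow] using
      abs_prod_pow_mul_listDeriv_le_one hΦ (α := Pi.single i m) (by simpa using hm) hl ξ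
  calc ‖ξ‖ ^ m * |listDeriv l ⇑Φ ξ| ≤ (n * |ξ i|) ^ m * |listDeriv l ⇑Φ ξ| := by
        gcongr; exact norm_le_card_mul_abs_of_forall_abs_le ξ fun j => hi j (Finset.mem_univ j)
    _ = n ^ m * (|ξ i| ^ m * |listDeriv l ⇑Φ ξ|) := by ring
    _ ≤ n ^ m := mul_le_of_le_one_right (by positivity) hcoord

lemma abs_prod_pow_le_norm_pow (u : Euc n) (α : Fin n → ℕ) :
    |∏ i, u i ^ α i| ≤ ‖u‖ ^ ∑ i, α i := by
  rw [Finset.abs_prod, ← Finset.prod_pow_eq_pow_sum]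
  gcongr with i
  rw [abs_pow, ← Real.norm_eq_abs]
  gcongr
  exact PiLp.norm_apply_le u i

lemma mem_schwartzSetN_of_eq_mul_comp_affine {χ G : Euc n → ℝ} (hχ : ContDiff ℝ ∞ χ)
    (hG : ContDiff ℝ ∞ G) {Ψ : 𝓢(Euc n, ℝ)} {κ a c M : ℝ} {b d : Euc n} (ha : |a| ≤ 1)
    (hc : |c| ≤ 1) (hΨ : ∀ u, Ψ u = κ * (χ (a • u + b) * G (c • u + d)))
    (hM : ∀ α : Fin n → ℕ, ∑ i, α i ≤ N → ∀ γ δ : List (Fin n), γ.length ≤ N → δ.length ≤ N →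
      ∀ u, |(∏ i, u i ^ α i) * (listDeriv γ χ (a • u + b) * listDeriv δ G (c • u + d))| ≤ M)
    (hκ : |κ| * (2 ^ N * M) ≤ 1) : Ψ ∈ schwartzSetN N := by
  intro α β hα hβ u
  have hlen : (multiIndexList β).length ≤ N := by rwa [length_multiIndexList]
  have hM₀ : 0 ≤ M := (abs_nonneg _).trans (hM α hα [] [] (by simp) (by simp) u)
  have hLeibniz := abs_mul_listDeriv_mul_comp_affine_le hχ hG ha hc u (∏ i, u i ^ α i) M
    (multiIndexList β) [] [] fun γ δ hγ hδ =>
      hM α hα γ δ (by simp at hγ; omega) (by simp at hδ; omega) u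
  simp only [listDeriv_nil] at hLeibniz
  have hprod : ContDiff ℝ ∞ fun u => χ (a • u + b) * G (c • u + d) :=
    (hχ.comp (by fun_prop)).mul (hG.comp (by fun_prop))
  rw [coe_mDeriv, show ⇑Ψ = fun u => κ * (χ (a • u + b) * G (c • u + d)) from funext hΨ,
    listDeriv_const_mul _ hprod]
  calc |(∏ i, u i ^ α i) * (κ * listDeriv (multiIndexList β)
          (fun u => χ (a • u + b) * G (c • u + d)) u)|
      = |κ| * |(∏ i, u i ^ α i) * listDeriv (multiIndexList β)
          (fun u => χ (a • u + b) * G (c • u + d)) u| := by rw [mul_left_comm, abs_mul]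
    _ ≤ |κ| * (2 ^ N * M) := by
      gcongr
      exact hLeibniz.trans (by gcongr; norm_num)
    _ ≤ 1 := hκ

end SchwartzSetN

section Rescaling

variable {N : ℕ} {Φ : 𝓢(Euc n, ℝ)}

lemma norm_pow_mul_abs_listDeriv_le_of_far (hΦ : Φ ∈ schwartzSetN N) {l : List (Fin n)}
    (hl : l.length ≤ N) {m : ℕ} (hm : m ≤ N) {t R : ℝ} (ht : 0 < t) (hR : 0 < R) {x y z u : Euc n}
    (hx : 4 * R ≤ ‖x‖) (hz : ‖z‖ ≤ R) (hy : ‖y‖ ≤ 3 * R) (hu : min t R • u = z - y) :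
    ‖u‖ ^ m * |listDeriv l ⇑Φ (t⁻¹ • (x - y))| ≤ (4 * (n + 1)) ^ N := by
  have hsu : min t R * ‖u‖ ≤ 4 * R := by
    calc min t R * ‖u‖ = ‖z - y‖ := by
          rw [← hu, norm_smul, Real.norm_of_nonneg (lt_min ht hR).le]
      _ ≤ ‖z‖ + ‖y‖ := norm_sub_le _ _
      _ ≤ 4 * R := by linarith
  have hD := abs_listDeriv_le_one hΦ hl (t⁻¹ • (x - y))
  rcases le_total t R with htR | hRt
  · rw [min_eq_left htR] at hsu
    have hξ : R ≤ t * ‖t⁻¹ • (x - y)‖ := by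
      rw [norm_smul, Real.norm_of_nonneg (inv_nonneg.2 ht.le), ← mul_assoc, mul_inv_cancel₀ ht.ne',
        one_mul]
      linarith [norm_sub_norm_le x y]
    have hu4 : ‖u‖ ≤ 4 * ‖t⁻¹ • (x - y)‖ := le_of_mul_le_mul_left (by nlinarith) ht
    calc ‖u‖ ^ m * |listDeriv l ⇑Φ (t⁻¹ • (x - y))|
        ≤ (4 * ‖t⁻¹ • (x - y)‖) ^ m * |listDeriv l ⇑Φ (t⁻¹ • (x - y))| := by gcongr
      _ = 4 ^ m * (‖t⁻¹ • (x - y)‖ ^ m * |listDeriv l ⇑Φ (t⁻¹ • (x - y))|) := by ring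
      _ ≤ 4 ^ m * n ^ m := by gcongr; exact norm_pow_mul_abs_listDeriv_le hΦ hl hm _
      _ ≤ (4 * (n + 1)) ^ N := by
        rw [← mul_pow]
        exact (pow_le_pow_left₀ (by positivity) (by linarith) m).trans
          (pow_le_pow_right₀ (by linarith [(n.cast_nonneg : (0 : ℝ) ≤ n)]) hm)
  · rw [min_eq_right hRt] at hsu
    have hu4 : ‖u‖ ≤ 4 := le_of_mul_le_mul_left (by linarith) hR
    calc ‖u‖ ^ m * |listDeriv l ⇑Φ (t⁻¹ • (x - y))| ≤ 4 ^ m * 1 := by gcongr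
      _ ≤ (4 * (n + 1)) ^ N := by
        rw [mul_one]
        exact (pow_le_pow_right₀ (by norm_num) hm).trans
          (pow_le_pow_left₀ (by norm_num) (by linarith [(n.cast_nonneg : (0 : ℝ) ≤ n)]) N)

lemma abs_prod_mul_listDeriv_cutoff_mul_le (hΦ : Φ ∈ schwartzSetN N) {χ : Euc n → ℝ} {C : ℝ}
    (hC : ∀ γ : List (Fin n), γ.length ≤ N → ∀ y, |listDeriv γ χ y| ≤ C)
    (hχ : tsupport χ ⊆ closedBall 0 3) {t R : ℝ} (ht : 0 < t) (hR : 0 < R) {x z : Euc n}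
    (hx : 4 * R ≤ ‖x‖) (hz : ‖z‖ ≤ R) {α : Fin n → ℕ} (hα : ∑ i, α i ≤ N)
    {γ δ : List (Fin n)} (hγ : γ.length ≤ N) (hδ : δ.length ≤ N) (u : Euc n) :
    |(∏ i, u i ^ α i) * (listDeriv γ χ (R⁻¹ • (z - min t R • u)) *
      listDeriv δ Φ (t⁻¹ • (x - (z - min t R • u))))| ≤ C * (4 * (n + 1)) ^ N := by
  set y := z - min t R • u
  have hC₀ : 0 ≤ C := (abs_nonneg _).trans (hC [] (by simp) 0)
  by_cases hsupp : R⁻¹ • y ∈ tsupport χ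
  · have hy : ‖y‖ ≤ 3 * R := by
      have := hχ hsupp
      rwa [mem_closedBall_zero_iff, norm_smul, Real.norm_of_nonneg (inv_nonneg.2 hR.le),
        inv_mul_le_iff₀ hR, mul_comm] at this
    calc |(∏ i, u i ^ α i) * (listDeriv γ χ (R⁻¹ • y) * listDeriv δ Φ (t⁻¹ • (x - y)))|
        = |listDeriv γ χ (R⁻¹ • y)| *
          (|∏ i, u i ^ α i| * |listDeriv δ Φ (t⁻¹ • (x - y))|) := by
          simp only [abs_mul]; ring
      _ ≤ C * ((‖u‖ ^ ∑ i, α i) * |listDeriv δ Φ (t⁻¹ • (x - y))|) := by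
          gcongr
          · exact hC γ hγ _
          · exact abs_prod_pow_le_norm_pow u α
      _ ≤ C * (4 * (n + 1)) ^ N := by
          gcongr
          exact norm_pow_mul_abs_listDeriv_le_of_far hΦ hδ hα ht hR hx hz hy
            (_root_.sub_sub_cancel _ _).symm
  · rw [image_eq_zero_of_notMem_tsupport fun h => hsupp (tsupport_listDeriv_subset γ _ h)]
    rw [zero_mul, mul_zero, abs_zero]
    positivity

lemma exists_abs_listDeriv_le {h : Euc n → ℝ} (hh : ContDiff ℝ ∞ h) (hs : HasCompactSupport h)
    (N : ℕ) : ∃ C, ∀ l : List (Fin n), l.length ≤ N → ∀ y, |listDeriv l h y| ≤ C := by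
  have hbdd : ∀ l : List (Fin n), ∃ C, ∀ y, ‖listDeriv l h y‖ ≤ C := fun l =>
    (contDiff_listDeriv hh l).continuous.bounded_above_of_compact_support
      (hs.of_isClosed_subset (isClosed_tsupport _) (tsupport_listDeriv_subset l h))
  choose C hC using hbdd
  obtain ⟨B, hB⟩ := ((List.finite_length_le (Fin n) N).image C).bddAbove
  exact ⟨B, fun l hl y => (hC l y).trans (hB ⟨l, hl, rfl⟩)⟩

lemma antilipschitzWith_smul_add {a : ℝ} (ha : a ≠ 0) (b : Euc n) :
    AntilipschitzWith ‖a‖₊⁻¹ (fun y : Euc n => a • y + b) :=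
  AntilipschitzWith.of_le_mul_dist fun y y' => by
    rw [dist_add_right, dist_smul₀, NNReal.coe_inv, coe_nnnorm, ← mul_assoc,
      inv_mul_cancel₀ (norm_ne_zero_iff.2 ha), one_mul]

def compSMulAdd (Φ : 𝓢(Euc n, ℝ)) {a : ℝ} (ha : a ≠ 0) (b : Euc n) : 𝓢(Euc n, ℝ) :=
  SchwartzMap.compCLMOfAntilipschitz ℝ (by fun_prop) (antilipschitzWith_smul_add ha b) Φ

@[simp] lemma compSMulAdd_apply (Φ : 𝓢(Euc n, ℝ)) {a : ℝ} (ha : a ≠ 0) (b y : Euc n) :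
    compSMulAdd Φ ha b y = Φ (a • y + b) := rfl

lemma mul_dilateShift_eq_of_forall_eq_mul {χ : Euc n → ℝ} (hχ : ∀ y, ‖y‖ ≤ 2 → χ y = 1)
    {Φ Ψ : 𝓢(Euc n, ℝ)} {K t s R : ℝ} (ht : 0 < t) (hs : 0 < s) (hK : K ≠ 0) (hR : 0 < R)
    {x z : Euc n} (hΨ : ∀ u, Ψ u = K⁻¹ * (s / t) ^ n *
      (χ (-(s / R) • u + R⁻¹ • z) * Φ ((s / t) • u + t⁻¹ • (x - z))))
    {y : Euc n} (hy : ‖y‖ ≤ 2 * R) : K * dilateShift Ψ s hs z y = dilateShift Φ t ht x y := by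
  have hu₁ : -(s / R) • (s⁻¹ • (z - y)) + R⁻¹ • z = R⁻¹ • y := by
    rw [neg_smul, smul_smul, show s / R * s⁻¹ = R⁻¹ by field_simp]
    module
  have hu₂ : (s / t) • (s⁻¹ • (z - y)) + t⁻¹ • (x - z) = t⁻¹ • (x - y) := by
    rw [smul_smul, show s / t * s⁻¹ = t⁻¹ by field_simp]
    module
  have hχ₁ : χ (R⁻¹ • y) = 1 := by
    apply hχ
    rw [norm_smul, Real.norm_of_nonneg (inv_nonneg.2 hR.le), inv_mul_le_iff₀ hR, mul_comm]
    exact hy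
  rw [dilateShift_apply, dilateShift_apply, hΨ, hu₁, hu₂, hχ₁, div_pow]
  field_simp

theorem exists_rescaled_mem_schwartzSetN (N : ℕ) :
    ∃ K : ℝ, 0 < K ∧ ∀ Φ ∈ schwartzSetN N, ∀ (t : ℝ) (ht : 0 < t) (R : ℝ) (x z : Euc n),
      0 < R → 4 * R ≤ ‖x‖ → ‖z‖ ≤ R →
      ∃ (Ψ : 𝓢(Euc n, ℝ)) (s : ℝ) (hs : 0 < s), Ψ ∈ schwartzSetN N ∧
        ∀ y, ‖y‖ < 2 * R → K * dilateShift Ψ s hs z y = dilateShift Φ t ht x y := by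
  let χ : ContDiffBump (0 : Euc n) := ⟨2, 3, two_pos, by norm_num⟩
  obtain ⟨C, hC⟩ := exists_abs_listDeriv_le χ.contDiff χ.hasCompactSupport N
  set M := max C 1 * (4 * (n + 1)) ^ N
  have hK : 0 < 2 ^ N * M := by positivity
  refine ⟨2 ^ N * M, hK, fun Φ hΦ t ht R x z hR hx hz => ?_⟩
  set s := min t R
  have hs : 0 < s := lt_min ht hR
  have hcut : (⇑χ ∘ fun u : Euc n => -(s / R) • u + R⁻¹ • z).HasTemperateGrowth :=
    (χ.hasCompactSupport.hasTemperateGrowth χ.contDiff).comp (by fun_prop)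
  let Ψ : 𝓢(Euc n, ℝ) := ((2 ^ N * M)⁻¹ * (s / t) ^ n) •
    SchwartzMap.smulLeftCLM ℝ (⇑χ ∘ fun u => -(s / R) • u + R⁻¹ • z)
      (compSMulAdd Φ (div_pos hs ht).ne' (t⁻¹ • (x - z)))
  have hΨ : ∀ u, Ψ u = (2 ^ N * M)⁻¹ * (s / t) ^ n *
      (χ (-(s / R) • u + R⁻¹ • z) * Φ ((s / t) • u + t⁻¹ • (x - z))) := by
    intro u
    rw [smul_apply, SchwartzMap.smulLeftCLM_apply_apply hcut, smul_eq_mul, smul_eq_mul,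
      compSMulAdd_apply]
    rfl
  refine ⟨Ψ, s, hs,
    mem_schwartzSetN_of_eq_mul_comp_affine (M := M) χ.contDiff (Φ.smooth ⊤) ?_ ?_ hΨ ?_ ?_,
    fun y hy => ?_⟩
  · rw [abs_neg, abs_of_pos (div_pos hs hR)]
    exact (div_le_one hR).2 (min_le_right _ _)
  · rw [abs_of_pos (div_pos hs ht)]
    exact (div_le_one ht).2 (min_le_left _ _)
  · intro α hα γ δ hγ hδ u
    rw [show -(s / R) • u + R⁻¹ • z = R⁻¹ • (z - s • u) by module,
      show (s / t) • u + t⁻¹ • (x - z) = t⁻¹ • (x - (z - s • u)) by module]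
    exact abs_prod_mul_listDeriv_cutoff_mul_le hΦ
      (fun γ hγ y => (hC γ hγ y).trans (le_max_left _ _)) χ.tsupport_eq.subset ht hR hx hz hα
      hγ hδ u
  · rw [abs_of_nonneg (by positivity), mul_comm, ← mul_assoc, mul_inv_cancel₀ hK.ne', one_mul]
    exact pow_le_one₀ (by positivity) ((div_le_one ht).2 (min_le_left _ _))
  · refine mul_dilateShift_eq_of_forall_eq_mul (fun y hy => ?_) ht hs hK.ne' hR hΨ hy.le
    exact χ.one_of_mem_closedBall (by simpa using hy)

end Rescaling

end Smooth

section Luxemburg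

variable {p : Euc n → ℝ}

lemma luxNorm_mono (hp : ∀ᵐ x ∂(volume : Measure (Euc n)), 0 ≤ p x) {f g : Euc n → ℝ≥0∞}
    (h : ∀ x, f x ≤ g x) : luxNorm p f ≤ luxNorm p g :=
  sInf_le_sInf fun l hl => (lintegral_mono_ae (hp.mono fun x hx =>
    ENNReal.rpow_le_rpow (ENNReal.div_le_div_right (h x) l) hx)).trans hl

lemma const_mul_luxNorm_le {c : ℝ≥0∞} (hc : c ≠ ∞) (g : Euc n → ℝ≥0∞) :
    c * luxNorm p g ≤ luxNorm p (fun x => c * g x) := by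
  rcases eq_or_ne c 0 with rfl | hc₀
  · simp
  refine le_sInf fun l hl => ?_
  have hdiv : ∀ x, g x / (l / c) = c * g x / l := fun x => by
    rw [ENNReal.div_eq_inv_mul, ENNReal.inv_div (Or.inl hc) (Or.inl hc₀), ENNReal.div_eq_inv_mul,
      ENNReal.div_eq_inv_mul, mul_assoc]
  have hmem : l / c ∈ {l : ℝ≥0∞ | ∫⁻ x, (g x / l) ^ p x ∂volume ≤ 1} := by
    simpa only [Set.mem_ofPred_eq, hdiv] using hl
  calc c * luxNorm p g ≤ c * (l / c) := mul_le_mul_right (sInf_le hmem) c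
    _ = l := ENNReal.mul_div_cancel hc₀ hc

lemma luxNorm_indicator_one_ne_zero {m : ℝ} (hm : 0 < m)
    (hpm : ∀ᵐ x ∂(volume : Measure (Euc n)), m ≤ p x) {s : Set (Euc n)} (hs : MeasurableSet s)
    (hs₀ : volume s ≠ 0) : luxNorm p (s.indicator 1) ≠ 0 := by
  have hlower : ∀ l ∈ {l : ℝ≥0∞ | ∫⁻ x, (s.indicator 1 x / l) ^ p x ∂volume ≤ 1},
      min 1 (volume s ^ m⁻¹) ≤ l := by
    intro l hl
    rcases le_or_gt 1 l with hl₁ | hl₁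
    · exact (min_le_left _ _).trans hl₁
    have hbound : (l ^ m)⁻¹ * volume s ≤ 1 := calc
      (l ^ m)⁻¹ * volume s = ∫⁻ _ in s, (l ^ m)⁻¹ := (setLIntegral_const _ _).symm
      _ ≤ ∫⁻ x in s, (s.indicator 1 x / l) ^ p x := by
        refine lintegral_mono_ae ?_
        filter_upwards [ae_restrict_of_ae hpm, ae_restrict_mem hs] with x hx hxs
        rw [Set.indicator_of_mem hxs, Pi.one_apply, one_div, ← ENNReal.inv_rpow]
        exact ENNReal.rpow_le_rpow_of_exponent_le (ENNReal.one_le_inv.2 hl₁.le) hx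
      _ ≤ ∫⁻ x, (s.indicator 1 x / l) ^ p x := setLIntegral_le_lintegral _ _
      _ ≤ 1 := hl
    have hvol : volume s ≤ l ^ m := by
      rw [← inv_inv (l ^ m), ENNReal.le_inv_iff_mul_le, mul_comm]
      exact hbound
    calc min 1 (volume s ^ m⁻¹) ≤ volume s ^ m⁻¹ := min_le_right _ _
      _ ≤ (l ^ m) ^ m⁻¹ := ENNReal.rpow_le_rpow hvol (inv_nonneg.2 hm.le)
      _ = l := ENNReal.rpow_rpow_inv hm.ne' l
  have hpos : 0 < min 1 (volume s ^ m⁻¹) :=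
    lt_min one_pos (ENNReal.rpow_pos_of_nonneg (pos_iff_ne_zero.2 hs₀) (inv_nonneg.2 hm.le))
  exact (hpos.trans_le (le_sInf hlower)).ne'

lemma le_luxNorm_div_luxNorm_indicator (hp : ∀ᵐ x ∂(volume : Measure (Euc n)), 0 ≤ p x)
    {s : Set (Euc n)} (hs : luxNorm p (s.indicator 1) ≠ 0) {g : Euc n → ℝ≥0∞}
    (hg : luxNorm p g ≠ ∞) {c : ℝ≥0∞} (hc : ∀ z ∈ s, c ≤ g z) :
    c ≤ luxNorm p g / luxNorm p (s.indicator 1) := by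
  refine ENNReal.le_of_forall_nnreal_lt fun r hr => ?_
  have hrg : ∀ x, (r : ℝ≥0∞) * s.indicator 1 x ≤ g x := fun x => by
    by_cases hx : x ∈ s
    · simpa [hx] using hr.le.trans (hc x hx)
    · simp [hx]
  rw [ENNReal.le_div_iff_mul_le (Or.inl hs) (Or.inr hg)]
  exact (const_mul_luxNorm_le ENNReal.coe_ne_top _).trans (luxNorm_mono hp hrg)

end Luxemburg

lemma apply_eq_apply_of_eqOn {E : Type*} [NormedAddCommGroup E] [NormedSpace ℝ E]
    (f : 𝓢(E, ℝ) →L[ℝ] ℝ) {S U : Set E}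
    (hf : ∀ φ : 𝓢(E, ℝ), Disjoint (tsupport ⇑φ) S → f φ = 0) (hU : IsOpen U) (hSU : S ⊆ U)
    {φ ψ : 𝓢(E, ℝ)} (h : Set.EqOn φ ψ U) : f φ = f ψ := by
  have hsupp : tsupport ⇑(φ - ψ) ⊆ Uᶜ :=
    closure_minimal (fun y hy hyU => hy (by simp [h hyU])) hU.isClosed_compl
  rw [← sub_eq_zero, ← map_sub]
  exact hf _ ((Set.disjoint_compl_left_iff_subset.2 hSU).mono_left hsupp)

theorem exists_grandMax_le_mul_grandMax (N : ℕ) :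
    ∃ K : ℝ, 0 < K ∧ ∀ (f : Distribution n) (R : ℝ), 0 < R →
      (∀ φ : 𝓢(Euc n, ℝ), Disjoint (tsupport ⇑φ) (closedBall (0 : Euc n) R) → f φ = 0) →
      ∀ x z : Euc n, 4 * R ≤ ‖x‖ → ‖z‖ ≤ R →
        grandMax N f x ≤ ENNReal.ofReal K * grandMax N f z := by
  obtain ⟨K, hK, hrescale⟩ := exists_rescaled_mem_schwartzSetN (n := n) N
  refine ⟨K, hK, fun f R hR hf x z hx hz => iSup₂_le fun Φ hΦ => iSup₂_le fun t ht => ?_⟩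
  obtain ⟨Ψ, s, hs, hΨ, hEq⟩ := hrescale Φ hΦ t ht R x z hR hx hz
  have hconv : distConv f Φ t ht x = K * distConv f Ψ s hs z := by
    rw [distConv, distConv, ← smul_eq_mul, ← map_smul]
    refine apply_eq_apply_of_eqOn f hf isOpen_ball
      (closedBall_subset_ball (by linarith : R < 2 * R)) fun y hy => (hEq y ?_).symm
    simpa using hy
  calc (‖distConv f Φ t ht x‖₊ : ℝ≥0∞) = ENNReal.ofReal K * ‖distConv f Ψ s hs z‖₊ := by
        rw [hconv, nnnorm_mul, ENNReal.coe_mul, ← enorm_eq_nnnorm K, Real.enorm_eq_ofReal hK.le]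
    _ ≤ ENNReal.ofReal K * grandMax N f z := by
        gcongr
        exact le_iSup₂_of_le Ψ hΨ (le_iSup₂_of_le s hs le_rfl)

theorem statement10_general {n : ℕ} (p : Euc n → ℝ) (p₀ : ℝ) (hp : IsMP0 p p₀) (N : ℕ) :
    ∃ C : ℝ≥0∞, C < ∞ ∧
    ∀ (f : Distribution n) (R : ℝ), 1 < R → hardyNorm p N f < ∞ →
      (∀ φ : 𝓢(Euc n, ℝ), Disjoint (tsupport ⇑φ) (closedBall (0 : Euc n) R) → f φ = 0) →
      ∀ x : Euc n, 4 * R ≤ ‖x‖ →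
        grandMax N f x ≤ C * hardyNorm p N f * (ballNorm p 0 R)⁻¹ := by
  obtain ⟨m, hp₀m, hpm⟩ := hp.p₀_lt_essInf
  have hm : 0 < m := hp.p₀_pos.trans hp₀m
  obtain ⟨K, hK, hcompare⟩ := exists_grandMax_le_mul_grandMax (n := n) N
  have hK₀ : ENNReal.ofReal K ≠ 0 := by simpa using hK
  refine ⟨ENNReal.ofReal K, ENNReal.ofReal_lt_top, fun f R hR hH hf x hx => ?_⟩
  have hR₀ : 0 < R := by linarith
  have hball : ballNorm p 0 R ≠ 0 := luxNorm_indicator_one_ne_zero hm hpm measurableSet_closedBall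
    (measure_closedBall_pos volume 0 hR₀).ne'
  have hle := le_luxNorm_div_luxNorm_indicator (hpm.mono fun x hx => hm.le.trans hx) hball hH.ne
    (c := (ENNReal.ofReal K)⁻¹ * grandMax N f x) fun z hz =>
      (ENNReal.inv_mul_le_iff hK₀ ENNReal.ofReal_ne_top).2
        (hcompare f R hR₀ hf x z hx (by simpa using hz))
  rw [ENNReal.inv_mul_le_iff hK₀ ENNReal.ofReal_ne_top] at hle
  rw [mul_assoc, ← div_eq_mul_inv]
  exact hle

/-- decay of the grand maximal function of a compactly supported
distribution in `H^{p(·)}`. -/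
theorem statement10 {n : ℕ} (hn : 1 ≤ n) (p : Euc n → ℝ) (p₀ : ℝ) (hp : IsMP0 p p₀)
    (N : ℕ) (hN : (n : ℝ) / p₀ + n + 1 < N) :
    ∃ C : ℝ≥0∞, C < ∞ ∧
    ∀ (f : Distribution n) (R : ℝ), 1 < R → hardyNorm p N f < ∞ →
      (∀ φ : 𝓢(Euc n, ℝ), Disjoint (tsupport ⇑φ) (closedBall (0 : Euc n) R) → f φ = 0) →
      ∀ x : Euc n, 4 * R ≤ ‖x‖ →
        grandMax N f x ≤ C * hardyNorm p N f * (ballNorm p 0 R)⁻¹ :=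
  statement10_general p p₀ hp N

end VarHardy
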